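/- arXiv:2111.10858 — 2 statements merged into one kernel-verified Lean document; each statement's English description precedes it below -/
import Mathlib

section
/- Under the setting of the previous statement, the differential of x*(W₀) = P_{N(W₀)} q for a fixed vector q ∈ ℝ^n under a perturbation ∂W₀ of W₀ (with rank kept constant) is ∂x* = −(C + Cᵀ) q, where C = W₀† ∂W₀ P_{N(W₀)}. -/
/-!
Write `P = W₀† W₀`. The Penrose equations `W₀ W₀† W₀ = W₀` and `(W₀† W₀)ᵀ = W₀† W₀` make `P τ` a
symmetric idempotent for every `τ`, and `W₀ (1 - P) = 0`. Differentiating `Pᵀ = P` and `P² = P`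
shows that `E = P'` is symmetric with `P E + E P = E`, hence `E P = (1 - P) E = (E (1 - P))ᵀ` and
`E = E (1 - P) + (E (1 - P))ᵀ`. By the product rule `E = W₀† W₀' + (W₀†)' W₀`, and the second term
is killed by `1 - P`, so `E (1 - P) = C`. Finally `x* = (1 - P) q` has derivative `-E q`.
-/

attribute [local instance] Matrix.normedAddCommGroup Matrix.normedSpace

open scoped Matrix

section MatrixCalculus

variable {𝕜 : Type*} [NontriviallyNormedField 𝕜] [CompleteSpace 𝕜]
  {l m n : Type*} [Fintype l] [Fintype m] [Fintype n] {t : 𝕜}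

theorem HasDerivAt.matrix_mul {A : 𝕜 → Matrix l m 𝕜} {B : 𝕜 → Matrix m n 𝕜}
    {A' : Matrix l m 𝕜} {B' : Matrix m n 𝕜} (hA : HasDerivAt A A' t) (hB : HasDerivAt B B' t) :
    HasDerivAt (fun τ => A τ * B τ) (A t * B' + A' * B t) t := by
  let mul : Matrix l m 𝕜 →L[𝕜] Matrix m n 𝕜 →L[𝕜] Matrix l n 𝕜 :=
    LinearMap.toContinuousLinearMap
      (LinearMap.toContinuousLinearMap.toLinearMap ∘ₗ mulLinearMap (n := n) 𝕜)
  exact mul.hasDerivAt_of_bilinear (fun _ => hA) (fun _ => hB)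

theorem HasDerivAt.matrix_transpose {A : 𝕜 → Matrix m n 𝕜} {A' : Matrix m n 𝕜}
    (hA : HasDerivAt A A' t) : HasDerivAt (fun τ => (A τ)ᵀ) A'ᵀ t := by
  let transpose : Matrix m n 𝕜 →L[𝕜] Matrix n m 𝕜 :=
    LinearMap.toContinuousLinearMap (Matrix.transposeLinearEquiv m n 𝕜 𝕜).toLinearMap
  exact transpose.hasFDerivAt.comp_hasDerivAt t hA

theorem HasDerivAt.matrix_mulVec {A : 𝕜 → Matrix m n 𝕜} {A' : Matrix m n 𝕜}
    (hA : HasDerivAt A A' t) (v : n → 𝕜) : HasDerivAt (fun τ => A τ *ᵥ v) (A' *ᵥ v) t := by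
  let mulVec : Matrix m n 𝕜 →L[𝕜] (m → 𝕜) :=
    LinearMap.toContinuousLinearMap ((Matrix.mulVecBilin 𝕜 𝕜).flip v)
  exact mulVec.hasFDerivAt.comp_hasDerivAt t hA

variable {P : 𝕜 → Matrix n n 𝕜} {E : Matrix n n 𝕜}

theorem HasDerivAt.transpose_eq_self_of_forall (hsymm : ∀ τ, (P τ)ᵀ = P τ)
    (hP : HasDerivAt P E t) : Eᵀ = E :=
  hP.matrix_transpose.unique (by rwa [funext hsymm])

theorem HasDerivAt.mul_add_mul_eq_of_forall_isIdempotentElem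
    (hidem : ∀ τ, IsIdempotentElem (P τ)) (hP : HasDerivAt P E t) :
    P t * E + E * P t = E :=
  (hP.matrix_mul hP).unique (by rwa [funext fun τ => (hidem τ).eq])

end MatrixCalculus

namespace Matrix

variable {R : Type*} [CommRing R] {m n : Type*} [Fintype m] [Fintype n]
  {W : Matrix m n R} {G : Matrix n m R}

theorem isIdempotentElem_mul_of_mul_mul_eq (h : W * G * W = W) : IsIdempotentElem (G * W) := by
  rw [IsIdempotentElem, Matrix.mul_assoc, ← Matrix.mul_assoc W, h]

variable [DecidableEq n]

theorem mul_one_sub_mul_eq_zero_of_mul_mul_eq (h : W * G * W = W) : W * (1 - G * W) = 0 := by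
  rw [Matrix.mul_sub, Matrix.mul_one, ← Matrix.mul_assoc, h, sub_self]

theorem eq_mul_one_sub_add_transpose {P E : Matrix n n R} (hP : Pᵀ = P) (hE : Eᵀ = E)
    (h : P * E + E * P = E) : E = E * (1 - P) + (E * (1 - P))ᵀ := by
  have hEP : (E * (1 - P))ᵀ = E * P := by
    rw [transpose_mul, hE, transpose_sub, transpose_one, hP, Matrix.sub_mul, Matrix.one_mul]
    exact (eq_sub_of_add_eq' h).symm
  rw [hEP, Matrix.mul_sub, Matrix.mul_one, sub_add_cancel]

end Matrix

theorem differential_wrt_inactive_rows_general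
    {k₀ n : ℕ}
    (W₀ : ℝ → Matrix (Fin k₀) (Fin n) ℝ) (W₀dag : ℝ → Matrix (Fin n) (Fin k₀) ℝ)
    -- W₀dag τ is the Moore–Penrose pseudoinverse of W₀ τ for every τ
    (h1 : ∀ τ, W₀ τ * W₀dag τ * W₀ τ = W₀ τ)
    (h3 : ∀ τ, (W₀dag τ * W₀ τ).transpose = W₀dag τ * W₀ τ)
    (t : ℝ) (W₀' : Matrix (Fin k₀) (Fin n) ℝ)
    (hW : HasDerivAt W₀ W₀' t)
    -- constant rank: the pseudoinverse varies differentiably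
    (hdag : DifferentiableAt ℝ W₀dag t)
    (q : Fin n → ℝ)
    (xstar : ℝ → (Fin n → ℝ)) (hx : ∀ τ, xstar τ = (1 - W₀dag τ * W₀ τ).mulVec q)
    (C : Matrix (Fin n) (Fin n) ℝ) (hC : C = W₀dag t * W₀' * (1 - W₀dag t * W₀ t)) :
    HasDerivAt xstar (-((C + C.transpose).mulVec q)) t := by
  obtain ⟨D, hD⟩ : ∃ D, HasDerivAt W₀dag D t := ⟨_, hdag.hasDerivAt⟩
  have hP := hD.matrix_mul hW
  set E := W₀dag t * W₀' + D * W₀ t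
  have hEC : E * (1 - W₀dag t * W₀ t) = C := by
    rw [Matrix.add_mul, Matrix.mul_assoc D,
      Matrix.mul_one_sub_mul_eq_zero_of_mul_mul_eq (h1 t), Matrix.mul_zero, add_zero, hC]
  have hE : E = C + Cᵀ := by
    have hidem τ := Matrix.isIdempotentElem_mul_of_mul_mul_eq (h1 τ)
    rw [← hEC]
    exact Matrix.eq_mul_one_sub_add_transpose (h3 t) (hP.transpose_eq_self_of_forall h3)
      (hP.mul_add_mul_eq_of_forall_isIdempotentElem hidem)
  rw [funext hx]
  convert ((hasDerivAt_const t 1).fun_sub hP).matrix_mulVec q using 1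
  rw [zero_sub, Matrix.neg_mulVec, hE]

/-- Differential of x*(W₀) = P_{N(W₀)} q under a constant-rank perturbation of W₀:
    ∂x* = −(C + Cᵀ) q with C = W₀† ∂W₀ P_{N(W₀)}. -/
theorem differential_wrt_inactive_rows
    {k₀ n : ℕ}
    (W₀ : ℝ → Matrix (Fin k₀) (Fin n) ℝ) (W₀dag : ℝ → Matrix (Fin n) (Fin k₀) ℝ)
    -- W₀dag τ is the Moore–Penrose pseudoinverse of W₀ τ for every τ
    (h1 : ∀ τ, W₀ τ * W₀dag τ * W₀ τ = W₀ τ)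
    (h2 : ∀ τ, W₀dag τ * W₀ τ * W₀dag τ = W₀dag τ)
    (h3 : ∀ τ, (W₀dag τ * W₀ τ).transpose = W₀dag τ * W₀ τ)
    (h4 : ∀ τ, (W₀ τ * W₀dag τ).transpose = W₀ τ * W₀dag τ)
    (t : ℝ) (W₀' : Matrix (Fin k₀) (Fin n) ℝ)
    (hW : HasDerivAt W₀ W₀' t)
    -- constant rank: the pseudoinverse varies differentiably
    (hdag : DifferentiableAt ℝ W₀dag t)
    (q : Fin n → ℝ)
    (xstar : ℝ → (Fin n → ℝ)) (hx : ∀ τ, xstar τ = (1 - W₀dag τ * W₀ τ).mulVec q)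
    (C : Matrix (Fin n) (Fin n) ℝ) (hC : C = W₀dag t * W₀' * (1 - W₀dag t * W₀ t)) :
    HasDerivAt xstar (-((C + C.transpose).mulVec q)) t :=
  differential_wrt_inactive_rows_general W₀ W₀dag h1 h3 t W₀' hW hdag q xstar hx C hC
end

section
/- Let U(x) = (1/2)‖x − x_t‖₂² and x*(W₀) = P_{N(W₀)} q with q ∈ ℝ^n fixed. Then, at a point where rank(W₀) is locally constant, the gradient of U(x*(W₀)) with respect to W₀ is ∇_{W₀} U = −(P_{N(W₀)} (q (∇_x U)ᵀ + (∇_x U) qᵀ) W₀†)ᵀ, where ∇_x U = x* − x_t. -/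
attribute [local instance] Matrix.normedAddCommGroup Matrix.normedSpace

/-!
Differentiating the Penrose identities `M * M⁺ * M = M` and `(M⁺ * M)ᵀ = M⁺ * M` at `W₀`, where
`M ↦ M⁺` is differentiable, determines the derivative of the projector `M⁺ * M` without knowing
that of `M⁺`: in direction `Δ` it is `C + Cᵀ` with `C = W₀⁺ * Δ * (1 - W₀⁺ * W₀)`. Hence
`∂x* = -(C + Cᵀ) q`, the chain rule gives `dU = ⟨x* - x_t, ∂x*⟩`, and cyclicity of the trace turns
this into `trace (Gᵀ * Δ)`.
-/

open Matrix

/-- `E` stands for the derivative of the pseudoinverse `X = A⁺` in direction `Δ`; `hE₁` and `hE₃`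
are the derivatives of the Penrose identities `A * X * A = A` and `(X * A)ᵀ = X * A`. -/
theorem mul_add_mul_eq_of_linearized_penrose {R : Type*} [CommRing R] {m n : Type*} [Fintype m]
    [Fintype n] [DecidableEq n] {A : Matrix m n R} {X E : Matrix n m R} (Δ : Matrix m n R)
    (hAXA : A * X * A = A) (hXAX : X * A * X = X) (hXA : (X * A)ᵀ = X * A)
    (hE₁ : (Δ * X + A * E) * A + A * X * Δ = Δ) (hE₃ : (E * A + X * Δ)ᵀ = E * A + X * Δ) :
    E * A + X * Δ = X * Δ * (1 - X * A) + (X * Δ * (1 - X * A))ᵀ := by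
  have hN : (1 - X * A)ᵀ = 1 - X * A := by rw [transpose_sub, transpose_one, hXA]
  have hSN : (E * A + X * Δ) * (1 - X * A) = X * Δ * (1 - X * A) := by
    have : E * A * (X * A) = E * A := by rw [Matrix.mul_assoc, ← Matrix.mul_assoc A, hAXA]
    rw [Matrix.add_mul, Matrix.mul_sub, Matrix.mul_one, this, sub_self, zero_add]
  have hPS : X * A * (E * A + X * Δ) = X * Δ * (1 - X * A) := by
    have h := congrArg (X * ·) hE₁
    simp only [Matrix.mul_add, Matrix.add_mul, Matrix.mul_sub, Matrix.mul_one] at h ⊢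
    simp only [← Matrix.mul_assoc, hXAX] at h ⊢
    linear_combination (norm := module) h
  calc E * A + X * Δ = X * A * (E * A + X * Δ) + ((E * A + X * Δ) * (1 - X * A))ᵀ := by
        rw [transpose_mul, hN, hE₃, Matrix.sub_mul, Matrix.one_mul]; abel
    _ = X * Δ * (1 - X * A) + (X * Δ * (1 - X * A))ᵀ := by rw [hPS, hSN]

theorem trace_mul_vecMulVec_add_vecMulVec_mul {R : Type*} [CommRing R] {m n : Type*} [Fintype m]
    [Fintype n] (N : Matrix n n R) (X : Matrix n m R) (Δ : Matrix m n R) (g q : n → R) :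
    trace (N * (vecMulVec q g + vecMulVec g q) * X * Δ) =
      g ⬝ᵥ ((X * Δ * N + (X * Δ * N)ᵀ) *ᵥ q) := by
  rw [Matrix.mul_assoc, Matrix.mul_assoc, trace_mul_comm, Matrix.mul_assoc, Matrix.add_mul,
    trace_add, vecMulVec_mul, vecMulVec_mul, trace_vecMulVec, trace_vecMulVec, add_mulVec,
    dotProduct_add, mulVec_transpose, dotProduct_mulVec g, dotProduct_comm q]

section Calculus

variable {𝕜 : Type*} [NontriviallyNormedField 𝕜] [CompleteSpace 𝕜]
  {E : Type*} [NormedAddCommGroup E] [NormedSpace 𝕜 E]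
  {l m n : Type*} [Fintype l] [Fintype m] [Fintype n]

theorem HasFDerivAt.matrix_mul {f : E → Matrix l m 𝕜} {g : E → Matrix m n 𝕜}
    {f' : E →L[𝕜] Matrix l m 𝕜} {g' : E →L[𝕜] Matrix m n 𝕜} {x : E}
    (hf : HasFDerivAt f f' x) (hg : HasFDerivAt g g' x) :
    ∃ L : E →L[𝕜] Matrix l n 𝕜, HasFDerivAt (fun y => f y * g y) L x ∧
      ∀ Δ, L Δ = f' Δ * g x + f x * g' Δ :=
  ⟨_, ((mulLinearMap 𝕜 : Matrix l m 𝕜 →ₗ[𝕜] Matrix m n 𝕜 →ₗ[𝕜] Matrix l n 𝕜)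
    ).toContinuousBilinearMap.hasFDerivAt_of_bilinear hf hg, fun _ => add_comm _ _⟩

theorem HasFDerivAt.matrix_transpose {f : E → Matrix m n 𝕜} {f' : E →L[𝕜] Matrix m n 𝕜} {x : E}
    (hf : HasFDerivAt f f' x) :
    ∃ L : E →L[𝕜] Matrix n m 𝕜, HasFDerivAt (fun y => (f y)ᵀ) L x ∧ ∀ Δ, L Δ = (f' Δ)ᵀ :=
  ⟨_, (transposeLinearEquiv m n 𝕜 𝕜).toLinearMap.toContinuousLinearMap.hasFDerivAt.comp x hf,
    fun _ => rfl⟩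

theorem HasFDerivAt.mulVec_const {f : E → Matrix m n 𝕜} {f' : E →L[𝕜] Matrix m n 𝕜} {x : E}
    (hf : HasFDerivAt f f' x) (q : n → 𝕜) :
    ∃ L : E →L[𝕜] (m → 𝕜), HasFDerivAt (fun y => f y *ᵥ q) L x ∧ ∀ Δ, L Δ = f' Δ *ᵥ q :=
  ⟨_, ((mulVecBilin 𝕜 𝕜 : Matrix m n 𝕜 →ₗ[𝕜] (n → 𝕜) →ₗ[𝕜] (m → 𝕜)).flip q
    ).toContinuousLinearMap.hasFDerivAt.comp x hf, fun _ => rfl⟩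

theorem HasFDerivAt.pinv_mul_self [DecidableEq n] {pinv : Matrix m n 𝕜 → Matrix n m 𝕜}
    {A : Matrix m n 𝕜} {D : Matrix m n 𝕜 →L[𝕜] Matrix n m 𝕜} (hD : HasFDerivAt pinv D A)
    (h1 : ∀ M, M * pinv M * M = M) (h2 : pinv A * A * pinv A = pinv A)
    (h3 : ∀ M, (pinv M * M)ᵀ = pinv M * M) :
    ∃ P' : Matrix m n 𝕜 →L[𝕜] Matrix n n 𝕜, HasFDerivAt (fun M => pinv M * M) P' A ∧
      ∀ Δ, P' Δ = pinv A * Δ * (1 - pinv A * A) + (pinv A * Δ * (1 - pinv A * A))ᵀ := by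
  obtain ⟨P', hP', hP'_apply⟩ := hD.matrix_mul (hasFDerivAt_id A)
  obtain ⟨Q', hQ', hQ'_apply⟩ := (hasFDerivAt_id A).matrix_mul hD
  obtain ⟨T', hT', hT'_apply⟩ := hQ'.matrix_mul (hasFDerivAt_id A)
  obtain ⟨Pt', hPt', hPt'_apply⟩ := hP'.matrix_transpose
  refine ⟨P', hP', fun Δ => (hP'_apply Δ).trans ?_⟩
  have hE₁ : (Δ * pinv A + A * D Δ) * A + A * pinv A * Δ = Δ := by
    have hid := (hasFDerivAt_id (𝕜 := 𝕜) A).congr_of_eventuallyEq (.of_forall h1)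
    have h := congrArg (· Δ) (hT'.unique hid)
    rw [hT'_apply, hQ'_apply] at h
    exact h
  have hE₃ : (D Δ * A + pinv A * Δ)ᵀ = D Δ * A + pinv A * Δ := by
    have h := congrArg (· Δ) (hPt'.unique (hP'.congr_of_eventuallyEq (.of_forall h3)))
    rw [hPt'_apply, hP'_apply] at h
    exact h
  exact mul_add_mul_eq_of_linearized_penrose Δ (h1 A) h2 (h3 A) hE₁ hE₃

end Calculus

theorem HasFDerivAt.half_sum_sq_sub {E : Type*} [NormedAddCommGroup E] [NormedSpace ℝ E]
    {ι : Type*} [Fintype ι] {u : E → ι → ℝ} {u' : E →L[ℝ] (ι → ℝ)} {x : E}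
    (hu : HasFDerivAt u u' x) (c : ι → ℝ) :
    ∃ L : E →L[ℝ] ℝ, HasFDerivAt (fun y => 1 / 2 * ∑ i, (u y i - c i) ^ 2) L x ∧
      ∀ Δ, L Δ = (u x - c) ⬝ᵥ u' Δ := by
  have hd := hu.sub_const c
  have h := ((dotProductBilin ℝ ℝ).toContinuousBilinearMap.hasFDerivAt_of_bilinear hd hd).const_mul
    (1 / 2 : ℝ)
  refine ⟨_, h.congr_of_eventuallyEq (.of_forall fun y => ?_), fun Δ => ?_⟩
  · simp only [LinearMap.toContinuousBilinearMap_apply, dotProductBilin_apply_apply, dotProduct,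
      Pi.sub_apply, sq]
  · change 1 / 2 * ((u x - c) ⬝ᵥ u' Δ + u' Δ ⬝ᵥ (u x - c)) = _
    rw [dotProduct_comm (u' Δ)]
    ring

theorem gradient_wrt_inactive_rows_general
    {k₀ n : ℕ}
    (pinv : Matrix (Fin k₀) (Fin n) ℝ → Matrix (Fin n) (Fin k₀) ℝ)
    -- pinv M is the Moore–Penrose pseudoinverse of M, for every M
    (h1 : ∀ M, M * pinv M * M = M)
    (h2 : ∀ M, pinv M * M * pinv M = pinv M)
    (h3 : ∀ M, (pinv M * M).transpose = pinv M * M)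
    (W₀ : Matrix (Fin k₀) (Fin n) ℝ)
    -- locally constant rank at W₀
    (hrank : DifferentiableAt ℝ pinv W₀)
    (q xt : Fin n → ℝ)
    (xstar : Matrix (Fin k₀) (Fin n) ℝ → (Fin n → ℝ))
    (hx : ∀ M, xstar M = (1 - pinv M * M).mulVec q)
    (F : Matrix (Fin k₀) (Fin n) ℝ → ℝ)
    (hF : ∀ M, F M = (1/2) * ∑ i, (xstar M i - xt i)^2)
    (G : Matrix (Fin k₀) (Fin n) ℝ)
    (hG : G = -((1 - pinv W₀ * W₀) *
        (Matrix.vecMulVec q (xstar W₀ - xt) +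
         Matrix.vecMulVec (xstar W₀ - xt) q) * pinv W₀).transpose) :
    ∃ L : Matrix (Fin k₀) (Fin n) ℝ →L[ℝ] ℝ,
      HasFDerivAt F L W₀ ∧
      ∀ Δ : Matrix (Fin k₀) (Fin n) ℝ, L Δ = Matrix.trace (G.transpose * Δ) := by
  obtain ⟨P', hP', hP'_apply⟩ := hrank.hasFDerivAt.pinv_mul_self h1 (h2 W₀) h3
  have hx' : ∀ M, xstar M = q - (pinv M * M) *ᵥ q := fun M => by
    rw [hx, sub_mulVec, one_mulVec]
  obtain ⟨X', hX', hX'_apply⟩ := hP'.mulVec_const q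
  obtain ⟨L, hL, hL_apply⟩ :=
    ((hX'.const_sub q).congr_of_eventuallyEq (.of_forall hx')).half_sum_sq_sub xt
  refine ⟨L, hL.congr_of_eventuallyEq (.of_forall hF), fun Δ => (hL_apply Δ).trans ?_⟩
  rw [_root_.neg_apply, hX'_apply, hG, transpose_neg, transpose_transpose, Matrix.neg_mul,
    trace_neg, trace_mul_vecMulVec_add_vecMulVec_mul, dotProduct_neg]
  exact congrArg (fun B => -((xstar W₀ - xt) ⬝ᵥ B *ᵥ q)) (hP'_apply Δ)

/-- Gradient of U(x*(W₀)) with respect to W₀, where x*(W₀) = P_{N(W₀)} q: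
    ∇_{W₀} U = −(P_{N(W₀)} (q ∇ₓUᵀ + ∇ₓU qᵀ) W₀†)ᵀ, with ∇ₓU = x* − x_t,
    at a point where the rank of W₀ is locally constant (encoded by
    differentiability of the pseudoinverse map). -/
theorem gradient_wrt_inactive_rows
    {k₀ n : ℕ}
    (pinv : Matrix (Fin k₀) (Fin n) ℝ → Matrix (Fin n) (Fin k₀) ℝ)
    -- pinv M is the Moore–Penrose pseudoinverse of M, for every M
    (h1 : ∀ M, M * pinv M * M = M)
    (h2 : ∀ M, pinv M * M * pinv M = pinv M)
    (h3 : ∀ M, (pinv M * M).transpose = pinv M * M)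
    (h4 : ∀ M, (M * pinv M).transpose = M * pinv M)
    (W₀ : Matrix (Fin k₀) (Fin n) ℝ)
    -- locally constant rank at W₀
    (hrank : DifferentiableAt ℝ pinv W₀)
    (q xt : Fin n → ℝ)
    (xstar : Matrix (Fin k₀) (Fin n) ℝ → (Fin n → ℝ))
    (hx : ∀ M, xstar M = (1 - pinv M * M).mulVec q)
    (F : Matrix (Fin k₀) (Fin n) ℝ → ℝ)
    (hF : ∀ M, F M = (1/2) * ∑ i, (xstar M i - xt i)^2)
    (G : Matrix (Fin k₀) (Fin n) ℝ)
    (hG : G = -((1 - pinv W₀ * W₀) *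
        (Matrix.vecMulVec q (xstar W₀ - xt) +
         Matrix.vecMulVec (xstar W₀ - xt) q) * pinv W₀).transpose) :
    ∃ L : Matrix (Fin k₀) (Fin n) ℝ →L[ℝ] ℝ,
      HasFDerivAt F L W₀ ∧
      ∀ Δ : Matrix (Fin k₀) (Fin n) ℝ, L Δ = Matrix.trace (G.transpose * Δ) :=
  gradient_wrt_inactive_rows_general pinv h1 h2 h3 W₀ hrank q xt xstar hx F hF G hG
end
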